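/- Every arrow of the groupoid Cptr is the composite of a finite (directed) sequence of primitive reattachment arrows; equivalently, any two coupling trees of the same length are connected by a finite sequence of reattachment arrows. -/

import Mathlib

/-- A pre-coupling-tree in the "linear ordering" (word) representation: `len` is the number
of leaves, and `word` lists, from left to right, the level of the branch vertex at the bottom
of each region between adjacent leaves. -/
structure PreTree where
  len : ℕ
  word : List ℕ
deriving DecidableEq

namespace PreTree

/-- A coupling tree of length `n` is represented by a word that is a permutation of the
levels `1, …, n-1`. -/
def IsCoupling (t : PreTree) : Prop := t.word.Perm (List.range' 1 (t.len - 1))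

instance : DecidablePred IsCoupling := fun _ => List.decidablePerm _ _

/-- The null coupling tree (length 0). -/
def null : PreTree := ⟨0, []⟩

/-- The unique coupling tree of length one. -/
def one : PreTree := ⟨1, []⟩

/-- The unique coupling tree of length two. -/
def two : PreTree := ⟨2, [1]⟩

/-- The (1-based) rank of `x` among the entries of `w`. -/
def rank (w : List ℕ) (x : ℕ) : ℕ := (w.filter (fun y => y ≤ x)).length

/-- Renormalise the entries of a word (with distinct entries) to `1, …, |w|`,
preserving their relative order. -/
def relabel (w : List ℕ) : List ℕ := w.map (rank w)

/-- The maximal contiguous block of the word of `t` containing the entry `i` in which all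
entries are `≥ i`; this is the word of the subtree rooted at the branch vertex of level `i`. -/
def blockAt (i : ℕ) (t : PreTree) : List ℕ :=
  let p := t.word.idxOf i
  (((t.word.take p).reverse.takeWhile (fun x => decide (i ≤ x))).reverse) ++
    i :: ((t.word.drop (p + 1)).takeWhile (fun x => decide (i ≤ x)))

/-- The word of `t` with the block at level `i` removed. -/
def restAt (i : ℕ) (t : PreTree) : List ℕ :=
  let p := t.word.idxOf i
  ((t.word.take p).reverse.dropWhile (fun x => decide (i ≤ x))).reverse ++
    ((t.word.drop (p + 1)).dropWhile (fun x => decide (i ≤ x)))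

/-- The cut operation `∨ᵢ`: the upper coupling tree obtained by cutting `t` at the branch
vertex of level `i` (the null tree if `t` has no branch at level `i`). -/
def vee (i : ℕ) (t : PreTree) : PreTree :=
  if i ∈ t.word then ⟨(blockAt i t).length + 1, relabel (blockAt i t)⟩ else null

/-- The cut operation `∧ᵢ`: the bottom coupling tree obtained by cutting `t` at the branch
vertex of level `i` (that subtree being replaced by a leaf); `t` itself if `t` has no branch
at level `i`. -/
def wedge (i : ℕ) (t : PreTree) : PreTree :=
  if i ∈ t.word then ⟨t.len - (blockAt i t).length, relabel (restAt i t)⟩ else t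

/-- The partial order `≤ₜ` on levels: `i ≤ₜ j` iff the branch vertex at level `i` is connected
to the branch vertex at level `j` without passing through levels less than `i`, i.e. iff `j`
is a level of the subtree rooted at the vertex of level `i`. -/
def LeT (t : PreTree) (i j : ℕ) : Prop := i ∈ t.word ∧ j ∈ blockAt i t

instance (t : PreTree) (i j : ℕ) : Decidable (t.LeT i j) := instDecidableAnd

/-- The left coupling tree obtained by cutting `t` at its root. -/
def left (t : PreTree) : PreTree :=
  ⟨t.word.idxOf 1 + 1, relabel (t.word.take (t.word.idxOf 1))⟩

/-- The right coupling tree obtained by cutting `t` at its root. -/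
def right (t : PreTree) : PreTree :=
  ⟨t.len - t.word.idxOf 1 - 1, relabel (t.word.drop (t.word.idxOf 1 + 1))⟩

/-- Interchange the levels `n` and `n+1` in a word. -/
def swapLevels (n : ℕ) (w : List ℕ) : List ℕ :=
  w.map (fun x => if x = n then n + 1 else if x = n + 1 then n else x)

/-- `Reatt s t` holds iff there is a reattachment arrow `p(n) : s → t` at some level `n`:
`n ≤ₛ n+1`, `n ≤ₜ n+1`, and `t` is obtained from `s` by interchanging only the levels
`n` and `n+1`. -/
def Reatt (s t : PreTree) : Prop :=
  ∃ n : ℕ, s.LeT n (n + 1) ∧ t.LeT n (n + 1) ∧ t.len = s.len ∧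
    t.word = swapLevels n s.word

end PreTree

/-! Words of coupling trees are the permutations of the levels `1, …, m`, and a reattachment
swaps two consecutive levels whose positions are separated only by higher levels. Inserting the
top level `m + 1` at a fixed position along a reattachment path of words of `1, …, m` gives
again a reattachment path, since `m + 1` exceeds everything it can land between. Hence, by
induction on `m`: in a word of `1, …, m + 1`, rearrange the other letters so that `m` stands
just before `m + 1` and swap the two; repeating moves `m + 1` to the front, after which the
remaining word of `1, …, m` is sorted by induction. -/

namespace List

variable {α : Type*}

theorem insertIdx_append_of_le_length {l₁ l₂ : List α} {p : ℕ} {x : α} (h : p ≤ l₁.length) :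
    (l₁ ++ l₂).insertIdx p x = l₁.insertIdx p x ++ l₂ := by
  induction l₁ generalizing p with
  | nil => simp_all
  | cons a l ih =>
    cases p with
    | zero => simp
    | succ p => simp [ih (by simpa using h)]

theorem insertIdx_append_of_length_le {l₁ l₂ : List α} {p : ℕ} {x : α} (h : l₁.length ≤ p) :
    (l₁ ++ l₂).insertIdx p x = l₁ ++ l₂.insertIdx (p - l₁.length) x := by
  induction l₁ generalizing p with
  | nil => simp
  | cons a l ih =>
    cases p with
    | zero => simp at h
    | succ p => simp [ih (by simpa using h)]

theorem insertIdx_append_length (l₁ l₂ : List α) (x : α) :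
    (l₁ ++ l₂).insertIdx l₁.length x = l₁ ++ x :: l₂ := by
  simp [insertIdx_append_of_length_le le_rfl]

theorem exists_append_cons_perm_range' {p m : ℕ} (hpm : p < m) :
    ∃ t s : List ℕ, t.length = p ∧ t ++ m :: s ~ range' 1 m := by
  refine ⟨range' 1 p, range' (1 + p) (m - 1 - p), length_range', ?_⟩
  have hm : m = (m - 1) + 1 := by omega
  calc range' 1 p ++ m :: range' (1 + p) (m - 1 - p)
      ~ m :: (range' 1 p ++ range' (1 + p) (m - 1 - p)) := perm_middle
    _ = m :: range' 1 (m - 1) := by rw [range'_append_1, Nat.add_sub_of_le (by omega)]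
    _ ~ range' 1 (m - 1) ++ [m] := (perm_append_singleton _ _).symm
    _ = range' 1 m := by rw [hm, range'_concat]; simp [Nat.add_comm]

end List

namespace PreTree

open List Relation

/-- The reattachment arrows `Reatt`, read on words. -/
def WordReatt (w w' : List ℕ) : Prop :=
  ∃ l₁ l₂ l₃ a b, (a + 1 = b ∨ b + 1 = a) ∧ (∀ x ∈ l₂, a < x ∧ b < x) ∧
    w = l₁ ++ a :: l₂ ++ b :: l₃ ∧ w' = l₁ ++ b :: l₂ ++ a :: l₃

theorem WordReatt.symm {w w' : List ℕ} (h : WordReatt w w') : WordReatt w' w := by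
  obtain ⟨l₁, l₂, l₃, a, b, hab, hl₂, rfl, rfl⟩ := h
  exact ⟨l₁, l₂, l₃, b, a, hab.symm, fun x hx => (hl₂ x hx).symm, rfl, rfl⟩

instance : Std.Symm WordReatt := ⟨fun _ _ => WordReatt.symm⟩

theorem WordReatt.perm {w w' : List ℕ} (h : WordReatt w w') : w ~ w' := by
  obtain ⟨l₁, l₂, l₃, a, b, -, -, rfl, rfl⟩ := h
  simp only [List.append_assoc, List.cons_append]
  refine .append_left l₁ ?_
  calc a :: (l₂ ++ b :: l₃) ~ a :: b :: (l₂ ++ l₃) := .cons a perm_middle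
    _ ~ b :: a :: (l₂ ++ l₃) := .swap b a _
    _ ~ b :: (l₂ ++ a :: l₃) := .cons b perm_middle.symm

theorem wordReatt_adjacent (l₁ l₃ : List ℕ) (a : ℕ) :
    WordReatt (l₁ ++ a :: (a + 1) :: l₃) (l₁ ++ (a + 1) :: a :: l₃) :=
  ⟨l₁, [], l₃, a, a + 1, .inl rfl, by simp, by simp, by simp⟩

theorem WordReatt.insertIdx {w w' : List ℕ} {p x : ℕ} (hx : ∀ y ∈ w, y < x)
    (hp : p ≤ w.length) (h : WordReatt w w') :
    WordReatt (w.insertIdx p x) (w'.insertIdx p x) := by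
  obtain ⟨l₁, l₂, l₃, a, b, hab, hl₂, rfl, rfl⟩ := h
  have hax : a < x := hx a (by simp)
  have hbx : b < x := hx b (by simp)
  simp only [List.append_assoc, List.cons_append] at hp ⊢
  rcases le_or_gt p l₁.length with hp₁ | hp₁
  · simp only [insertIdx_append_of_le_length hp₁]
    exact ⟨l₁.insertIdx p x, l₂, l₃, a, b, hab, hl₂, by simp, by simp⟩
  obtain ⟨q, hq⟩ : ∃ q, p - l₁.length = q + 1 := ⟨p - l₁.length - 1, by omega⟩
  simp only [insertIdx_append_of_length_le hp₁.le, hq, insertIdx_succ_cons]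
  rcases le_or_gt q l₂.length with hq₂ | hq₂
  · simp only [insertIdx_append_of_le_length hq₂]
    refine ⟨l₁, l₂.insertIdx q x, l₃, a, b, hab, fun y hy => ?_, by simp, by simp⟩
    rcases (mem_insertIdx hq₂).mp hy with rfl | hy
    exacts [⟨hax, hbx⟩, hl₂ y hy]
  obtain ⟨r, hr⟩ : ∃ r, q - l₂.length = r + 1 := ⟨q - l₂.length - 1, by omega⟩
  simp only [insertIdx_append_of_length_le hq₂.le, hr, insertIdx_succ_cons]
  exact ⟨l₁, l₂, l₃.insertIdx r x, a, b, hab, hl₂, by simp, by simp⟩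

theorem WordReatt.reflTransGen_perm {w w' : List ℕ} (h : ReflTransGen WordReatt w w') :
    w ~ w' := by
  induction h with
  | refl => rfl
  | tail _ hstep ih => exact ih.trans hstep.perm

theorem WordReatt.reflTransGen_insertIdx {w w' : List ℕ} {p x : ℕ} (hx : ∀ y ∈ w, y < x)
    (hp : p ≤ w.length) (h : ReflTransGen WordReatt w w') :
    ReflTransGen WordReatt (w.insertIdx p x) (w'.insertIdx p x) := by
  induction h with
  | refl => rfl
  | tail hpath hstep ih =>
    have hperm := reflTransGen_perm hpath
    exact ih.tail (hstep.insertIdx (fun y hy => hx y (hperm.symm.subset hy))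
      (hperm.length_eq ▸ hp))

theorem WordReatt.reflTransGen_insert_max {u v u' v' : List ℕ} {x : ℕ}
    (hx : ∀ y ∈ u ++ v, y < x) (hlen : u.length = u'.length)
    (h : ReflTransGen WordReatt (u ++ v) (u' ++ v')) :
    ReflTransGen WordReatt (u ++ x :: v) (u' ++ x :: v') := by
  have := reflTransGen_insertIdx (p := u.length) hx (by simp) h
  rwa [insertIdx_append_length, hlen, insertIdx_append_length] at this

theorem WordReatt.exists_reflTransGen_cons_max {m : ℕ}
    (hconn : ∀ w w', w ~ range' 1 m → w' ~ range' 1 m → ReflTransGen WordReatt w w')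
    (a b : List ℕ) (hab : a ++ b ~ range' 1 m) :
    ∃ c, ReflTransGen WordReatt (a ++ (m + 1) :: b) ((m + 1) :: c) := by
  induction hp : a.length generalizing a b with
  | zero => exact ⟨b, by rw [length_eq_zero_iff.mp hp]; rfl⟩
  | succ p ih =>
    have hpm : p < m := by
      have := hab.length_eq
      simp only [length_append, hp, length_range'] at this
      omega
    obtain ⟨t, s, ht, hts⟩ := exists_append_cons_perm_range' hpm
    have hlt : ∀ y ∈ a ++ b, y < m + 1 := fun y hy => by
      have := mem_range'_1.mp (hab.subset hy); omega
    have hpath : ReflTransGen WordReatt (a ++ (m + 1) :: b) ((t ++ [m]) ++ (m + 1) :: s) :=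
      reflTransGen_insert_max hlt (by simp [hp, ht]) (hconn _ _ hab (by simpa using hts))
    obtain ⟨c, hc⟩ := ih t (m :: s) hts ht
    refine ⟨c, (hpath.tail ?_).trans hc⟩
    simpa using wordReatt_adjacent t s m

theorem WordReatt.reflTransGen_reverse_range' :
    ∀ (m : ℕ) {w : List ℕ}, w ~ range' 1 m → ReflTransGen WordReatt w (range' 1 m).reverse
  | 0, w, hw => by rw [perm_nil.mp hw]; rfl
  | m + 1, w, hw => by
    have hconn (u u' : List ℕ) (hu : u ~ range' 1 m) (hu' : u' ~ range' 1 m) :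
        ReflTransGen WordReatt u u' :=
      (reflTransGen_reverse_range' m hu).trans (_root_.symm (reflTransGen_reverse_range' m hu'))
    have hrange : range' 1 (m + 1) ~ (m + 1) :: range' 1 m := by
      simp [range'_concat, Nat.add_comm]
    have hmax : m + 1 ∈ w := hw.symm.subset (mem_range'_1.mpr ⟨by omega, by omega⟩)
    obtain ⟨a, b, rfl⟩ := append_of_mem hmax
    have hab : a ++ b ~ range' 1 m := (perm_middle.symm.trans (hw.trans hrange)).cons_inv
    obtain ⟨c, hc⟩ := exists_reflTransGen_cons_max hconn a b hab
    have hc' : c ~ range' 1 m :=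
      ((reflTransGen_perm hc).symm.trans (hw.trans hrange)).cons_inv
    have hlt : ∀ y ∈ c, y < m + 1 := fun y hy => by
      have := mem_range'_1.mp (hc'.subset hy); omega
    have hsorted := reflTransGen_insert_max (u := []) (u' := []) hlt rfl
      (hconn c (range' 1 m).reverse hc' (reverse_perm _))
    rw [range'_concat, reverse_append]
    simpa [Nat.add_comm] using hc.trans hsorted

theorem WordReatt.reflTransGen_of_perm {m : ℕ} {w w' : List ℕ} (hw : w ~ range' 1 m)
    (hw' : w' ~ range' 1 m) : ReflTransGen WordReatt w w' :=
  (reflTransGen_reverse_range' m hw).trans (_root_.symm (reflTransGen_reverse_range' m hw'))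

theorem swapLevels_swapLevels (n : ℕ) (w : List ℕ) : swapLevels n (swapLevels n w) = w := by
  simp only [swapLevels, List.map_map]
  conv_rhs => rw [← map_id w]
  refine map_congr_left fun x _ => ?_
  simp only [Function.comp_apply, id]
  split_ifs <;> omega

theorem swapLevels_of_forall_ne {n : ℕ} {w : List ℕ} (h : ∀ x ∈ w, x ≠ n ∧ x ≠ n + 1) :
    swapLevels n w = w := by
  conv_rhs => rw [← map_id w]
  refine map_congr_left fun x hx => ?_
  simp [h x hx]

theorem Reatt.symm {s t : PreTree} (h : Reatt s t) : Reatt t s := by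
  obtain ⟨n, hs, ht, hlen, hw⟩ := h
  exact ⟨n, ht, hs, hlen.symm, by rw [hw, swapLevels_swapLevels]⟩

theorem blockAt_mk_append_cons {L n : ℕ} {u v : List ℕ} (hu : n ∉ u) :
    blockAt n ⟨L, u ++ n :: v⟩ =
      (u.reverse.takeWhile (fun x => decide (n ≤ x))).reverse ++
        n :: v.takeWhile (fun x => decide (n ≤ x)) := by
  simp [blockAt, idxOf_append_of_notMem hu]

theorem leT_mk_of_before {L n : ℕ} {l₁ l₂ l₃ : List ℕ} (h₁ : n ∉ l₁) (h₂ : ∀ x ∈ l₂, n ≤ x) :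
    LeT ⟨L, l₁ ++ n :: l₂ ++ (n + 1) :: l₃⟩ n (n + 1) := by
  refine ⟨by simp, ?_⟩
  rw [append_assoc, cons_append, blockAt_mk_append_cons h₁,
    takeWhile_append_of_pos (by simpa using h₂)]
  simp

theorem leT_mk_of_after {L n : ℕ} {l₁ l₂ l₃ : List ℕ} (h₁ : n ∉ l₁) (h₂ : ∀ x ∈ l₂, n < x) :
    LeT ⟨L, l₁ ++ (n + 1) :: l₂ ++ n :: l₃⟩ n (n + 1) := by
  have hn : n ∉ l₁ ++ (n + 1) :: l₂ := by
    simpa [h₁] using fun h => (h₂ n h).false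
  refine ⟨by simp, ?_⟩
  rw [blockAt_mk_append_cons hn, reverse_append, reverse_cons, append_assoc, singleton_append,
    takeWhile_append_of_pos (by simpa using fun x hx => (h₂ x hx).le)]
  simp

theorem reatt_mk_of_before {L n : ℕ} {l₁ l₂ l₃ : List ℕ}
    (hw : (l₁ ++ n :: l₂ ++ (n + 1) :: l₃).Nodup) (h₂ : ∀ x ∈ l₂, n + 1 < x) :
    Reatt ⟨L, l₁ ++ n :: l₂ ++ (n + 1) :: l₃⟩ ⟨L, l₁ ++ (n + 1) :: l₂ ++ n :: l₃⟩ := by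
  have h₁ : ∀ x ∈ l₁, x ≠ n ∧ x ≠ n + 1 := by grind
  have h₃ : ∀ x ∈ l₃, x ≠ n ∧ x ≠ n + 1 := by grind
  have h₂' : ∀ x ∈ l₂, x ≠ n ∧ x ≠ n + 1 := fun x hx => by have := h₂ x hx; omega
  have hn : n ∉ l₁ := fun h => (h₁ n h).1 rfl
  refine ⟨n, leT_mk_of_before hn fun x hx => by have := h₂ x hx; omega,
    leT_mk_of_after hn fun x hx => Nat.lt_of_succ_lt (h₂ x hx), rfl, ?_⟩
  rw [show swapLevels n (l₁ ++ n :: l₂ ++ (n + 1) :: l₃) =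
      swapLevels n l₁ ++ (n + 1) :: swapLevels n l₂ ++ n :: swapLevels n l₃ by simp [swapLevels],
    swapLevels_of_forall_ne h₁, swapLevels_of_forall_ne h₂', swapLevels_of_forall_ne h₃]

theorem WordReatt.reatt {L : ℕ} {w w' : List ℕ} (hw : w.Nodup) (h : WordReatt w w') :
    Reatt ⟨L, w⟩ ⟨L, w'⟩ := by
  have hw' : w'.Nodup := h.perm.nodup_iff.mp hw
  obtain ⟨l₁, l₂, l₃, a, b, rfl | rfl, hl₂, rfl, rfl⟩ := h
  · exact reatt_mk_of_before hw fun x hx => (hl₂ x hx).2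
  · exact (reatt_mk_of_before hw' fun x hx => (hl₂ x hx).1).symm

theorem WordReatt.reflTransGen_reatt {L : ℕ} {w w' : List ℕ} (hw : w.Nodup)
    (h : ReflTransGen WordReatt w w') : ReflTransGen Reatt ⟨L, w⟩ ⟨L, w'⟩ := by
  induction h with
  | refl => rfl
  | tail hpath hstep ih =>
    exact ih.tail (hstep.reatt ((reflTransGen_perm hpath).nodup_iff.mp hw))

end PreTree

/-- Every arrow of the groupoid `Cptr` is a composite of a finite (directed)
sequence of primitive reattachment arrows: since there is exactly one arrow between any two
coupling trees of the same length, this says that any two coupling trees of the same length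
are connected by a finite sequence of reattachment arrows. -/
theorem statement3 (s t : PreTree) (hs : s.IsCoupling) (ht : t.IsCoupling)
    (hlen : s.len = t.len) :
    Relation.ReflTransGen PreTree.Reatt s t := by
  obtain ⟨L, w⟩ := s
  obtain ⟨L', w'⟩ := t
  obtain rfl : L = L' := hlen
  exact PreTree.WordReatt.reflTransGen_reatt (hs.nodup_iff.mpr List.nodup_range')
    (PreTree.WordReatt.reflTransGen_of_perm hs ht)
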